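/- For every even j with 2 ≤ j ≤ d−1 and m > 0, the inequality (1 − j/d)^{2m(d−j)} (1 − (j−1)/d)^{2mj} C(d−1, j) ≤ exp(−2mj(1 − 1/d) + j·log d)/j! holds, and consequently, with m = (log d + c)/2 and c > 0, the sum of these terms over even j is at most Σ_{j≥1} e^{−cj(1−1/d) + 2}/j!, a quantity tending to 0 as c → ∞ uniformly in d ≥ 2. -/

import Mathlib

/-!
Bounding each factor `1 - x` by `e^{-x}` turns the two powers of `sigmaITerm d j m` into
`e^{-2mj(1 - 1/d)}`, and `C(d-1, j) ≤ d^j / j!` gives the first bound. For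
`m = (log d + c) / 2` the factor `d^j` has to be cancelled more carefully:
`j! C(d-1, j) = ∏_{i<j} (d - 1 - i)` is at most `d^j e^{-j(j+1)/(2d)}`, which leaves the exponent
`(j log d - j(j+1)/2) / d ≤ (log d)^2 / (2d) ≤ 2`.
The resulting terms are dominated by `e^{2 - c/2} 2^{-k}`, whose sum `2 e^{2 - c/2}` tends to `0`
as `c → ∞` independently of `d`.
-/

open Finset Real

/-- The term of `Σ_I` indexed by even `j`, with `2m` in the exponents. -/
noncomputable def sigmaITerm (d j : ℕ) (m : ℝ) : ℝ :=
  (1 - (j : ℝ) / d) ^ (2 * m * ((d : ℝ) - j)) *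
    (1 - ((j : ℝ) - 1) / d) ^ (2 * m * j) * (Nat.choose (d - 1) j : ℝ)

theorem Real.one_sub_rpow_le_exp_neg_mul {x y : ℝ} (hx : x ≤ 1) (hy : 0 ≤ y) :
    (1 - x) ^ y ≤ exp (-(x * y)) := by
  calc (1 - x) ^ y ≤ exp (-x) ^ y := rpow_le_rpow (by linarith) (one_sub_le_exp_neg x) hy
    _ = exp (-(x * y)) := by rw [← exp_mul, neg_mul]

theorem Real.log_sq_le_four_mul {x : ℝ} (hx : 1 ≤ x) : log x ^ 2 ≤ 4 * x := by
  have hlog : log x ≤ 2 * √x := by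
    simpa [sqrt_eq_rpow, div_eq_mul_inv, mul_comm] using
      log_le_rpow_div (x := x) (ε := 1 / 2) (by linarith) (by norm_num)
  have hsq : √x ^ 2 = x := sq_sqrt (by linarith)
  nlinarith [log_nonneg hx, sqrt_nonneg x]

theorem Nat.two_pow_le_factorial_succ (k : ℕ) : 2 ^ k ≤ (k + 1).factorial := by
  simpa [add_comm] using Nat.factorial_mul_pow_le_factorial (m := 1) (n := k)

theorem Finset.sum_le_tsum_succ {f : ℕ → ℝ} (hf : Summable fun k => f (k + 1))
    (hf_nonneg : ∀ k, 0 ≤ f (k + 1)) {s : Finset ℕ} (hs : 0 ∉ s) :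
    ∑ j ∈ s, f j ≤ ∑' k, f (k + 1) := by
  have hpos : ∀ j ∈ s, j - 1 + 1 = j := fun j hj => by
    have : j ≠ 0 := fun h => hs (h ▸ hj)
    omega
  calc ∑ j ∈ s, f j = ∑ k ∈ s.image (· - 1), f (k + 1) := by
        rw [sum_image fun x hx y hy hxy => by
          have := hpos x hx; have := hpos y hy; omega]
        exact sum_congr rfl fun j hj => by rw [hpos j hj]
    _ ≤ ∑' k, f (k + 1) := hf.sum_le_tsum _ fun k _ => hf_nonneg k

theorem tendsto_two_mul_exp_two_sub_half :
    Filter.Tendsto (fun c : ℝ => 2 * exp (2 - c / 2)) Filter.atTop (nhds 0) := by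
  have : Filter.Tendsto (fun c : ℝ => 2 - c / 2) Filter.atTop Filter.atBot :=
    Filter.tendsto_atBot_add_const_left _ 2
      (Filter.tendsto_neg_atTop_atBot.comp (Filter.tendsto_id.atTop_div_const two_pos))
  simpa using (tendsto_exp_atBot.comp this).const_mul 2

section

variable {d j : ℕ} {c : ℝ}

theorem descFactorial_pred_le_pow_mul_exp (hjd : j ≤ d) :
    ((d - 1).descFactorial j : ℝ) ≤ (d : ℝ) ^ j * exp (-(j * (j + 1) / (2 * d))) := by
  induction j with
  | zero => simp
  | succ j ih =>
    have hd : (0 : ℝ) < d := by exact_mod_cast (show 0 < d by omega)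
    have hfactor : ((d - 1 - j : ℕ) : ℝ) ≤ d * exp (-((j + 1) / d)) := by
      have hcast : ((d - 1 - j : ℕ) : ℝ) = d * (1 - (j + 1) / d) := by
        rw [Nat.cast_sub (by omega), Nat.cast_sub (by omega)]
        field_simp
        ring
      rw [hcast]
      exact mul_le_mul_of_nonneg_left (one_sub_le_exp_neg _) hd.le
    calc ((d - 1).descFactorial (j + 1) : ℝ)
        = ((d - 1 - j : ℕ) : ℝ) * (d - 1).descFactorial j := by
          rw [Nat.descFactorial_succ, Nat.cast_mul]
      _ ≤ (d * exp (-((j + 1) / d))) * ((d : ℝ) ^ j * exp (-(j * (j + 1) / (2 * d)))) :=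
          mul_le_mul hfactor (ih (by omega)) (Nat.cast_nonneg _) (by positivity)
      _ = (d : ℝ) ^ (j + 1) * exp (-((j + 1 : ℕ) * ((j + 1 : ℕ) + 1) / (2 * d))) := by
          rw [mul_mul_mul_comm, ← pow_succ', ← exp_add]
          congr 2
          push_cast
          field_simp
          ring

theorem sigmaITerm_le_exp_mul_choose {m : ℝ} (hm : 0 ≤ m) (hd : 0 < d) (hjd : j ≤ d) :
    sigmaITerm d j m ≤ exp (-(2 * m * j * (1 - 1 / d))) * (d - 1).choose j := by
  have hD : (0 : ℝ) < d := by exact_mod_cast hd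
  have hJ : (j : ℝ) ≤ d := by exact_mod_cast hjd
  have hpowers : (1 - (j : ℝ) / d) ^ (2 * m * ((d : ℝ) - j)) *
      (1 - ((j : ℝ) - 1) / d) ^ (2 * m * j) ≤ exp (-(2 * m * j * (1 - 1 / d))) := by
    calc _ ≤ exp (-((j : ℝ) / d * (2 * m * ((d : ℝ) - j)))) *
          exp (-(((j : ℝ) - 1) / d * (2 * m * j))) := by
          gcongr
          · exact rpow_nonneg (by rw [sub_nonneg, div_le_one hD]; linarith) _
          · exact one_sub_rpow_le_exp_neg_mul (by rw [div_le_one hD]; linarith)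
              (by nlinarith)
          · exact one_sub_rpow_le_exp_neg_mul (by rw [div_le_one hD]; linarith) (by positivity)
      _ = exp (-(2 * m * j * (1 - 1 / d))) := by
          rw [← exp_add]
          congr 1
          field_simp
          ring
  unfold sigmaITerm
  gcongr

theorem sigmaITerm_le_exp_add_log_div_factorial {m : ℝ} (hm : 0 ≤ m) (hd : 0 < d)
    (hjd : j ≤ d) :
    sigmaITerm d j m ≤ exp (-(2 * m * j * (1 - 1 / d)) + j * log d) / j.factorial := by
  have hchoose : ((d - 1).choose j : ℝ) ≤ (d : ℝ) ^ j / j.factorial :=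
    (Nat.choose_le_pow_div j (d - 1)).trans (by gcongr; exact_mod_cast Nat.sub_le d 1)
  calc sigmaITerm d j m ≤ exp (-(2 * m * j * (1 - 1 / d))) * ((d : ℝ) ^ j / j.factorial) :=
        (sigmaITerm_le_exp_mul_choose hm hd hjd).trans (by gcongr)
    _ = exp (-(2 * m * j * (1 - 1 / d)) + j * log d) / j.factorial := by
        rw [exp_add, ← rpow_natCast, rpow_def_of_pos (by exact_mod_cast hd), mul_comm (log _)]
        ring

theorem sigmaITerm_log_add_le (hc : 0 ≤ c) (hd : 0 < d) (hjd : j ≤ d) :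
    sigmaITerm d j ((log d + c) / 2) ≤ exp (-(c * j * (1 - 1 / d)) + 2) / j.factorial := by
  have hD : (0 : ℝ) < d := by exact_mod_cast hd
  have hlog : 0 ≤ log d := log_nonneg (by exact_mod_cast hd)
  have hchoose : ((d - 1).choose j : ℝ) = (d - 1).descFactorial j / j.factorial := by
    rw [Nat.descFactorial_eq_factorial_mul_choose, Nat.cast_mul]
    field_simp
  have hexponent : (j * log d - j * (j + 1) / 2) / d ≤ 2 := by
    rw [div_le_iff₀ hD]
    nlinarith [log_sq_le_four_mul (x := d) (by exact_mod_cast hd), sq_nonneg (j - log d)]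
  calc sigmaITerm d j ((log d + c) / 2)
      ≤ exp (-((log d + c) * j * (1 - 1 / d))) * ((d - 1).descFactorial j / j.factorial) := by
        rw [← hchoose]
        exact (sigmaITerm_le_exp_mul_choose (by positivity) hd hjd).trans_eq (by congr 3; ring)
    _ ≤ exp (-((log d + c) * j * (1 - 1 / d))) *
          ((d : ℝ) ^ j * exp (-(j * (j + 1) / (2 * d))) / j.factorial) := by
        gcongr
        exact descFactorial_pred_le_pow_mul_exp hjd
    _ = exp (-(c * j * (1 - 1 / d)) + (j * log d - j * (j + 1) / 2) / d) / j.factorial := by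
        rw [← rpow_natCast, rpow_def_of_pos hD, mul_div_assoc', ← mul_assoc, ← exp_add,
          ← exp_add]
        congr 2
        field_simp
        ring
    _ ≤ exp (-(c * j * (1 - 1 / d)) + 2) / j.factorial := by gcongr

theorem sigmaI_tail_le (hc : 0 ≤ c) (hd : 2 ≤ d) (k : ℕ) :
    exp (-(c * (k + 1) * (1 - 1 / d)) + 2) / (k + 1).factorial ≤
      exp (2 - c / 2) * (1 / 2) ^ k := by
  have hhalf : (1 : ℝ) / 2 ≤ 1 - 1 / d := by
    have : (1 : ℝ) / d ≤ 1 / 2 := by gcongr; exact_mod_cast hd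
    linarith
  have hexp : exp (-(c * (k + 1) * (1 - 1 / d)) + 2) ≤ exp (2 - c / 2) := by
    gcongr
    nlinarith [mul_le_mul_of_nonneg_left hhalf hc, (k.cast_nonneg : (0 : ℝ) ≤ k)]
  have hfact : (1 : ℝ) / (k + 1).factorial ≤ (1 / 2) ^ k := by
    rw [div_pow, one_pow]
    gcongr
    exact_mod_cast Nat.two_pow_le_factorial_succ k
  calc _ = exp (-(c * (k + 1) * (1 - 1 / d)) + 2) * (1 / (k + 1).factorial) := by ring
    _ ≤ _ := by gcongr

theorem summable_sigmaI_tail (hc : 0 ≤ c) (hd : 2 ≤ d) :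
    Summable fun k : ℕ => exp (-(c * (k + 1) * (1 - 1 / d)) + 2) / (k + 1).factorial :=
  .of_nonneg_of_le (fun _ => by positivity) (sigmaI_tail_le hc hd)
    ((summable_geometric_of_lt_one (by norm_num) (by norm_num)).mul_left _)

theorem tsum_sigmaI_tail_le (hc : 0 ≤ c) (hd : 2 ≤ d) :
    ∑' k : ℕ, exp (-(c * (k + 1) * (1 - 1 / d)) + 2) / (k + 1).factorial ≤
      2 * exp (2 - c / 2) := by
  calc _ ≤ ∑' k : ℕ, exp (2 - c / 2) * (1 / 2) ^ k :=
        (summable_sigmaI_tail hc hd).tsum_le_tsum (sigmaI_tail_le hc hd)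
          ((summable_geometric_of_lt_one (by norm_num) (by norm_num)).mul_left _)
    _ = 2 * exp (2 - c / 2) := by rw [tsum_mul_left, tsum_geometric_two, mul_comm]

theorem sum_sigmaITerm_le_tsum (hc : 0 ≤ c) (hd : 2 ≤ d) :
    ∑ j ∈ (Icc 2 (d - 1)).filter Even, sigmaITerm d j ((log d + c) / 2) ≤
      ∑' k : ℕ, exp (-(c * (k + 1) * (1 - 1 / d)) + 2) / (k + 1).factorial := by
  have hmem : ∀ j ∈ (Icc 2 (d - 1)).filter Even, 2 ≤ j ∧ j ≤ d - 1 := fun j hj => by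
    simpa using (mem_filter.1 hj).1
  let F : ℕ → ℝ := fun j => exp (-(c * j * (1 - 1 / d)) + 2) / j.factorial
  calc _ ≤ ∑ j ∈ (Icc 2 (d - 1)).filter Even, F j :=
        sum_le_sum fun j hj => by
          obtain ⟨hj, hjd⟩ := hmem j hj
          exact sigmaITerm_log_add_le hc (by omega) (by omega)
    _ ≤ _ := by
        simpa [F] using sum_le_tsum_succ (f := F) (by simpa [F] using summable_sigmaI_tail hc hd)
          (fun _ => by positivity) (fun h => by simpa using (hmem 0 h).1)

end

theorem sigmaI_bound :
    (∀ d j : ℕ, ∀ m : ℝ, 0 < m → Even j → 2 ≤ j → j ≤ d - 1 →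
      sigmaITerm d j m ≤
        Real.exp (-(2 * m * j * (1 - 1 / d)) + j * Real.log d) / (Nat.factorial j)) ∧
    (∀ d : ℕ, 2 ≤ d → ∀ c : ℝ, 0 < c →
      ∑ j ∈ (Finset.Icc 2 (d - 1)).filter (fun j => Even j),
          sigmaITerm d j ((Real.log d + c) / 2) ≤
        ∑' j : ℕ, Real.exp (-(c * (j + 1) * (1 - 1 / d)) + 2) / (Nat.factorial (j + 1))) ∧
    (∀ ε : ℝ, 0 < ε → ∃ c₀ : ℝ, ∀ c : ℝ, c₀ ≤ c → ∀ d : ℕ, 2 ≤ d →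
      ∑ j ∈ (Finset.Icc 2 (d - 1)).filter (fun j => Even j),
          sigmaITerm d j ((Real.log d + c) / 2) ≤ ε) := by
  refine ⟨fun d j m hm _ hj hjd => sigmaITerm_le_exp_add_log_div_factorial hm.le (by omega)
      (by omega), fun d hd c hc => sum_sigmaITerm_le_tsum hc.le hd, fun ε hε => ?_⟩
  obtain ⟨c₀, hc₀⟩ := Filter.eventually_atTop.1
    (tendsto_two_mul_exp_two_sub_half.eventually_le_const hε)
  refine ⟨max c₀ 0, fun c hc d hd => ?_⟩
  have hc0 : 0 ≤ c := le_of_max_le_right hc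
  calc _ ≤ _ := sum_sigmaITerm_le_tsum hc0 hd
    _ ≤ 2 * exp (2 - c / 2) := tsum_sigmaI_tail_le hc0 hd
    _ ≤ ε := hc₀ c (le_of_max_le_left hc)
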